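/- (Gauge invariance of formula (26)) Let A_{ij} be a smooth symmetric tensor field on ℝ³, χ_i smooth functions and η a smooth function, and set A'_{ij} := A_{ij} + ∂_{(i}χ_{j)} + η δ_{ij}. Then A_{ij} and A'_{ij} produce the same tensor field via T^{ij} = ε^{kl(i} ∂_l ( ΔA^{j)}_{k} − ∂_p∂^{j)} A_{kp} ). -/

import Mathlib

/-- Partial derivative in the k-th Cartesian coordinate direction on ℝ^D. -/
noncomputable def pd {D : ℕ} (k : Fin D) (f : (Fin D → ℝ) → ℝ) : (Fin D → ℝ) → ℝ :=
  fun x => fderiv ℝ f x (Pi.single k 1)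

/-- Euclidean Laplacian Σ_k ∂_k∂_k. -/
noncomputable def lap {D : ℕ} (f : (Fin D → ℝ) → ℝ) : (Fin D → ℝ) → ℝ :=
  fun x => ∑ k, pd k (pd k f) x

/-- Three-dimensional Levi-Civita symbol with ε^{123} = 1. -/
def eps3 (i j k : Fin 3) : ℝ :=
  if (i,j,k) = (0,1,2) ∨ (i,j,k) = (1,2,0) ∨ (i,j,k) = (2,0,1) then 1
  else if (i,j,k) = (2,1,0) ∨ (i,j,k) = (1,0,2) ∨ (i,j,k) = (0,2,1) then -1
  else 0

/-- Formula (26): T^{ij} = ε^{kl(i} ∂_l ( ΔA^{j)}_k − ∂_p∂^{j)} A_{kp} ). -/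
noncomputable def T26 (A : Fin 3 → Fin 3 → (Fin 3 → ℝ) → ℝ) (i j : Fin 3) :
    (Fin 3 → ℝ) → ℝ :=
  fun x => (1/2 : ℝ) * ∑ k, ∑ l,
    (eps3 k l i * pd l (fun y => lap (A j k) y - ∑ p, pd j (pd p (A k p)) y) x
     + eps3 k l j * pd l (fun y => lap (A i k) y - ∑ p, pd i (pd p (A k p)) y) x)

/-! `T26 A` is linear in `A` and depends on `A` only through `B_{jk} = ΔA_{jk} − ∂_j∂_p A_{kp}`.
For a pure gauge field `∂_{(a}χ_{b)} + η δ_{ab}` this takes the form `B_{jk} = ∂_k G_j + δ_{jk} h`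
(with `G_j = ½(Δχ_j − ∂_j ∂_p χ_p)`, resp. `G_j = −∂_j η`, `h = Δη`). The `∂_k G_j` part is killed
by `ε^{kli} ∂_l`, an antisymmetric tensor contracted with symmetric second derivatives, and the
`δ_{jk} h` part contributes `ε^{jli} ∂_l h + ε^{ilj} ∂_l h = 0` once symmetrized in `i, j`. -/
open scoped ContDiff

section PartialDerivatives

variable {D : ℕ} {f g : (Fin D → ℝ) → ℝ}

@[fun_prop]
theorem contDiff_pd (k : Fin D) (hf : ContDiff ℝ ∞ f) : ContDiff ℝ ∞ (pd k f) :=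
  (hf.fderiv_right (by simp)).clm_apply contDiff_const

@[fun_prop]
theorem contDiff_lap (hf : ContDiff ℝ ∞ f) : ContDiff ℝ ∞ (lap f) := by
  unfold lap; fun_prop

theorem pd_add (k : Fin D) (hf : Differentiable ℝ f) (hg : Differentiable ℝ g) :
    pd k (fun x => f x + g x) = fun x => pd k f x + pd k g x := by
  ext x; simp [pd, fderiv_fun_add (hf x) (hg x)]

theorem pd_sub (k : Fin D) (hf : Differentiable ℝ f) (hg : Differentiable ℝ g) :
    pd k (fun x => f x - g x) = fun x => pd k f x - pd k g x := by
  ext x; simp [pd, fderiv_fun_sub (hf x) (hg x)]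

theorem pd_neg (k : Fin D) : pd k (fun x => -f x) = fun x => -pd k f x := by
  ext x; simp [pd]

theorem pd_const_mul (k : Fin D) (c : ℝ) (hf : Differentiable ℝ f) :
    pd k (fun x => c * f x) = fun x => c * pd k f x := by
  ext x; simp [pd, fderiv_const_mul (hf x) c]

theorem pd_mul_const (k : Fin D) (c : ℝ) (hf : Differentiable ℝ f) :
    pd k (fun x => f x * c) = fun x => pd k f x * c := by
  ext x; simp [pd, fderiv_mul_const (hf x) c]; ring

theorem pd_sum (k : Fin D) {ι : Type*} (s : Finset ι) {F : ι → (Fin D → ℝ) → ℝ}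
    (hF : ∀ p ∈ s, Differentiable ℝ (F p)) :
    pd k (fun x => ∑ p ∈ s, F p x) = fun x => ∑ p ∈ s, pd k (F p) x := by
  ext x; simp [pd, fderiv_fun_sum (fun p hp => (hF p hp) x)]

theorem pd_comm (i j : Fin D) (hf : ContDiff ℝ 2 f) : pd i (pd j f) = pd j (pd i f) := by
  ext x
  have hsymm : IsSymmSndFDerivAt ℝ f x := hf.contDiffAt.isSymmSndFDerivAt (by simp)
  have hdiff : DifferentiableAt ℝ (fderiv ℝ f) x :=
    (hf.fderiv_right (m := 1) (by norm_num)).differentiable one_ne_zero x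
  have hpd : ∀ v w, fderiv ℝ (fun y => fderiv ℝ f y w) x v = fderiv ℝ (fderiv ℝ f) x v w := by
    intro v w
    simp [fderiv_clm_apply hdiff (differentiableAt_const w)]
  change fderiv ℝ (fun y => fderiv ℝ f y _) x _ = fderiv ℝ (fun y => fderiv ℝ f y _) x _
  rw [hpd, hpd]
  exact hsymm _ _

theorem pd_pd_pd_rotate (a b c : Fin D) (hf : ContDiff ℝ ∞ f) :
    pd a (pd b (pd c f)) = pd c (pd a (pd b f)) := by
  rw [pd_comm b c (hf.of_le (by norm_cast)), pd_comm a c ((contDiff_pd b hf).of_le (by norm_cast))]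

theorem lap_add (hf : ContDiff ℝ ∞ f) (hg : ContDiff ℝ ∞ g) :
    lap (fun x => f x + g x) = fun x => lap f x + lap g x := by
  ext x
  simp (disch := fun_prop (disch := simp)) only [lap, pd_add, Finset.sum_add_distrib]

end PartialDerivatives

theorem Finset.sum_sum_mul_eq_zero_of_antisymm_of_symm {ι R : Type*} [CommRing R]
    [NoZeroDivisors R] [CharZero R] (s : Finset ι) {a b : ι → ι → R}
    (ha : ∀ k l, a k l = -a l k) (hb : ∀ k l, b k l = b l k) :
    ∑ k ∈ s, ∑ l ∈ s, a k l * b k l = 0 := by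
  refine CharZero.eq_neg_self_iff.mp ?_
  rw [← Finset.sum_neg_distrib, Finset.sum_comm]
  refine Finset.sum_congr rfl fun k _ => ?_
  rw [← Finset.sum_neg_distrib]
  refine Finset.sum_congr rfl fun l _ => ?_
  rw [ha, hb, neg_mul]

theorem eps3_swap_left (a b c : Fin 3) : eps3 a b c = -eps3 b a c := by
  fin_cases a <;> fin_cases b <;> fin_cases c <;> simp [eps3]

theorem eps3_swap_outer (a b c : Fin 3) : eps3 a b c = -eps3 c b a := by
  fin_cases a <;> fin_cases b <;> fin_cases c <;> simp [eps3]

section Gauge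

variable {D : ℕ}

noncomputable def lapSubGradDiv (A : Fin D → Fin D → (Fin D → ℝ) → ℝ) (j k : Fin D) :
    (Fin D → ℝ) → ℝ :=
  fun y => lap (A j k) y - ∑ p, pd j (pd p (A k p)) y

@[fun_prop]
theorem contDiff_lapSubGradDiv {A : Fin D → Fin D → (Fin D → ℝ) → ℝ}
    (hA : ∀ a b, ContDiff ℝ ∞ (A a b)) (j k : Fin D) : ContDiff ℝ ∞ (lapSubGradDiv A j k) := by
  unfold lapSubGradDiv; fun_prop

theorem lapSubGradDiv_add {A S : Fin D → Fin D → (Fin D → ℝ) → ℝ}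
    (hA : ∀ a b, ContDiff ℝ ∞ (A a b)) (hS : ∀ a b, ContDiff ℝ ∞ (S a b)) (j k : Fin D) :
    lapSubGradDiv (fun a b y => A a b y + S a b y) j k
      = fun y => lapSubGradDiv A j k y + lapSubGradDiv S j k y := by
  ext y
  simp (disch := fun_prop (disch := simp)) only [lapSubGradDiv, lap_add, pd_add,
    Finset.sum_add_distrib]
  ring

noncomputable def symmGrad (χ : Fin D → (Fin D → ℝ) → ℝ) (a b : Fin D) : (Fin D → ℝ) → ℝ :=
  fun x => 1 / 2 * (pd a (χ b) x + pd b (χ a) x)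

noncomputable def scalarMulDelta (η : (Fin D → ℝ) → ℝ) (a b : Fin D) : (Fin D → ℝ) → ℝ :=
  fun x => η x * if a = b then 1 else 0

@[fun_prop]
theorem contDiff_symmGrad {χ : Fin D → (Fin D → ℝ) → ℝ} (hχ : ∀ a, ContDiff ℝ ∞ (χ a))
    (a b : Fin D) : ContDiff ℝ ∞ (symmGrad χ a b) := by
  unfold symmGrad; fun_prop

@[fun_prop]
theorem contDiff_scalarMulDelta {η : (Fin D → ℝ) → ℝ} (hη : ContDiff ℝ ∞ η) (a b : Fin D) :
    ContDiff ℝ ∞ (scalarMulDelta η a b) := by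
  unfold scalarMulDelta; fun_prop

theorem lapSubGradDiv_symmGrad {χ : Fin D → (Fin D → ℝ) → ℝ} (hχ : ∀ a, ContDiff ℝ ∞ (χ a))
    (j k : Fin D) :
    lapSubGradDiv (symmGrad χ) j k
      = pd k (fun y => 1 / 2 * (lap (χ j) y - ∑ p, pd j (pd p (χ p)) y)) := by
  ext y
  unfold lapSubGradDiv symmGrad lap
  simp (disch := fun_prop (disch := simp)) only [pd_add, pd_sub, pd_const_mul,
    pd_sum, Finset.sum_add_distrib, ← Finset.mul_sum]
  -- bring the free directions `k`, `j` outermost; both sides then agree term by term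
  simp only [pd_pd_pd_rotate _ _ k (hχ _), pd_pd_pd_rotate _ _ j (hχ _)]
  ring

theorem lapSubGradDiv_scalarMulDelta {η : (Fin D → ℝ) → ℝ} (hη : ContDiff ℝ ∞ η) (j k : Fin D) :
    lapSubGradDiv (scalarMulDelta η) j k
      = fun y => pd k (fun z => -pd j η z) y + lap η y * if j = k then 1 else 0 := by
  ext y
  unfold lapSubGradDiv scalarMulDelta lap
  simp (disch := fun_prop (disch := simp)) only [pd_mul_const, pd_neg]
  rw [pd_comm k j (hη.of_le (by norm_cast))]
  simp only [mul_ite, mul_one, mul_zero, Finset.sum_ite_eq, Finset.mem_univ, if_true,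
    Finset.sum_ite_irrel, Finset.sum_const_zero]
  ring

end Gauge

theorem T26_eq_lapSubGradDiv (A : Fin 3 → Fin 3 → (Fin 3 → ℝ) → ℝ) (i j : Fin 3)
    (x : Fin 3 → ℝ) :
    T26 A i j x = 1 / 2 * ∑ k, ∑ l,
      (eps3 k l i * pd l (lapSubGradDiv A j k) x + eps3 k l j * pd l (lapSubGradDiv A i k) x) :=
  rfl

theorem T26_add {A S : Fin 3 → Fin 3 → (Fin 3 → ℝ) → ℝ}
    (hA : ∀ a b, ContDiff ℝ ∞ (A a b)) (hS : ∀ a b, ContDiff ℝ ∞ (S a b)) (i j : Fin 3)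
    (x : Fin 3 → ℝ) :
    T26 (fun a b y => A a b y + S a b y) i j x = T26 A i j x + T26 S i j x := by
  simp (disch := fun_prop (disch := simp)) only [T26_eq_lapSubGradDiv, lapSubGradDiv_add hA hS,
    pd_add, mul_add, Finset.sum_add_distrib]
  ring

theorem sum_eps3_mul_pd_pd_eq_zero {g : (Fin 3 → ℝ) → ℝ} (hg : ContDiff ℝ 2 g) (i : Fin 3)
    (x : Fin 3 → ℝ) : ∑ k, ∑ l, eps3 k l i * pd l (pd k g) x = 0 :=
  Finset.sum_sum_mul_eq_zero_of_antisymm_of_symm _ (fun k l => eps3_swap_left k l i)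
    (fun k l => congrFun (pd_comm l k hg) x)

theorem T26_eq_zero_of_lapSubGradDiv_eq {S : Fin 3 → Fin 3 → (Fin 3 → ℝ) → ℝ}
    {G : Fin 3 → (Fin 3 → ℝ) → ℝ} {h : (Fin 3 → ℝ) → ℝ} (hG : ∀ j, ContDiff ℝ ∞ (G j))
    (hh : ContDiff ℝ ∞ h)
    (hS : ∀ j k, lapSubGradDiv S j k = fun y => pd k (G j) y + h y * if j = k then 1 else 0)
    (i j : Fin 3) (x : Fin 3 → ℝ) : T26 S i j x = 0 := by
  have hcurl : ∀ i j, ∑ k, ∑ l, eps3 k l i * pd l (pd k (G j)) x = 0 := fun i j =>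
    sum_eps3_mul_pd_pd_eq_zero ((hG j).of_le (by norm_cast)) i x
  simp (disch := fun_prop (disch := simp)) only [T26_eq_lapSubGradDiv, hS, pd_add, pd_mul_const,
    mul_add, Finset.sum_add_distrib, hcurl]
  simp only [mul_ite, mul_one, mul_zero, Finset.sum_ite_irrel, Finset.sum_const_zero,
    Finset.sum_ite_eq, Finset.mem_univ, if_true, zero_add, ← mul_add, ← Finset.sum_add_distrib,
    eps3_swap_outer j _ i, neg_mul, neg_add_cancel]

theorem T26_symmGrad {χ : Fin 3 → (Fin 3 → ℝ) → ℝ} (hχ : ∀ a, ContDiff ℝ ∞ (χ a)) (i j : Fin 3)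
    (x : Fin 3 → ℝ) : T26 (symmGrad χ) i j x = 0 :=
  T26_eq_zero_of_lapSubGradDiv_eq
    (G := fun j y => 1 / 2 * (lap (χ j) y - ∑ p, pd j (pd p (χ p)) y)) (h := 0)
    (fun j => by fun_prop) contDiff_const
    (fun j k => by simp [lapSubGradDiv_symmGrad hχ]) i j x

theorem T26_scalarMulDelta {η : (Fin 3 → ℝ) → ℝ} (hη : ContDiff ℝ ∞ η) (i j : Fin 3)
    (x : Fin 3 → ℝ) : T26 (scalarMulDelta η) i j x = 0 :=
  T26_eq_zero_of_lapSubGradDiv_eq (fun j => by fun_prop) (contDiff_lap hη)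
    (fun j k => lapSubGradDiv_scalarMulDelta hη j k) i j x

theorem stmt_16_general
    (A : Fin 3 → Fin 3 → (Fin 3 → ℝ) → ℝ)
    (hsmooth : ∀ i j, ContDiff ℝ (⊤ : ℕ∞) (A i j))
    (χ : Fin 3 → (Fin 3 → ℝ) → ℝ)
    (hχ : ∀ i, ContDiff ℝ (⊤ : ℕ∞) (χ i))
    (η : (Fin 3 → ℝ) → ℝ)
    (hη : ContDiff ℝ (⊤ : ℕ∞) η)
    (A' : Fin 3 → Fin 3 → (Fin 3 → ℝ) → ℝ)
    (hA' : ∀ i j x, A' i j x = A i j x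
      + (1/2 : ℝ) * (pd i (χ j) x + pd j (χ i) x)
      + η x * (if i = j then (1 : ℝ) else 0)) :
    ∀ i j x, T26 A' i j x = T26 A i j x := by
  have hA'_eq : A' = fun a b y => A a b y + symmGrad χ a b y + scalarMulDelta η a b y :=
    funext₃ hA'
  intro i j x
  rw [hA'_eq, T26_add (fun a b => by fun_prop) (contDiff_scalarMulDelta hη),
    T26_add hsmooth (contDiff_symmGrad hχ), T26_symmGrad hχ, T26_scalarMulDelta hη,
    add_zero, add_zero]

/-- gauge invariance of formula (26): replacing A_{ij} by
A_{ij} + ∂_{(i}χ_{j)} + η δ_{ij} does not change T^{ij} of formula (26). -/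
theorem stmt_16
    (A : Fin 3 → Fin 3 → (Fin 3 → ℝ) → ℝ)
    (hsmooth : ∀ i j, ContDiff ℝ (⊤ : ℕ∞) (A i j))
    (hAsym : ∀ i j x, A i j x = A j i x)
    (χ : Fin 3 → (Fin 3 → ℝ) → ℝ)
    (hχ : ∀ i, ContDiff ℝ (⊤ : ℕ∞) (χ i))
    (η : (Fin 3 → ℝ) → ℝ)
    (hη : ContDiff ℝ (⊤ : ℕ∞) η)
    (A' : Fin 3 → Fin 3 → (Fin 3 → ℝ) → ℝ)
    (hA' : ∀ i j x, A' i j x = A i j x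
      + (1/2 : ℝ) * (pd i (χ j) x + pd j (χ i) x)
      + η x * (if i = j then (1 : ℝ) else 0)) :
    ∀ i j x, T26 A' i j x = T26 A i j x :=
  stmt_16_general A hsmooth χ hχ η hη A' hA'
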